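/- Let F be a complex Finsler metric on a domain Ω ⊆ ℂⁿ, and let (p₀;v₀) ∈ Ω × ℂⁿ. Say that F is realizable at (p₀;v₀) if there exist a holomorphic map φ: U → Ω and λ ∈ ℂ with φ(0) = p₀, λ·φ'(0) = v₀ and |λ| = F(p₀;v₀). Then: (i) if F is realizable at (p₀;v₀), then F(p₀;v₀) ≥ κ_Ω(p₀;v₀); (ii) if K_F(p;v) ≤ −4 for all p ∈ Ω and v ∈ ℂⁿ∖{0}, then F(p;v) ≤ κ_Ω(p;v) for all (p;v) ∈ Ω × ℂⁿ; (iii) if F is realizable at (p₀;v₀) and K_F ≤ −4 everywhere, then F(p₀;v₀) = κ_Ω(p₀;v₀). -/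

import Mathlib

/-! Part (i) is immediate from the definition of `κ_Ω` as an infimum, and (iii) combines (i)
and (ii). Part (ii) is the Ahlfors–Schwarz lemma. For a holomorphic disk `φ` and `t < 1`, the
ratio `(1 - |ζ|²) F(φ(tζ); t φ'(tζ))` of the pullback of `F` to the Poincaré metric is upper
semicontinuous on the closed unit disk and vanishes on its boundary, so it attains its maximum
`M` at an interior point. Moving that point to `0` by a disk automorphism gives a pullback metric
`g` with `g(0) = M²` and `g ≤ M² (1 - |w|²)⁻²`; hence `Δ log g (0) ≤ 8` and the curvature of `g`
at `0` is at least `-4 / M²`. Curvature `≤ -4` thus forces `M ≤ 1`, so `t F(φ(0); φ'(0)) ≤ 1`,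
and letting `t → 1` gives `F ≤ κ_Ω` by homogeneity. -/

open Complex Filter MeasureTheory Metric Set ComplexConjugate
open scoped ComplexOrder

noncomputable section

/-- The unit disk in `ℂ`. -/
def UDisk : Set ℂ := Metric.ball 0 1

/-- The (lower) generalized Laplacian of `u : ℂ → ℝ` at `ζ`, with values in `[-∞,+∞]`:
`Δu(ζ) = 4·liminf_{r→0⁺} (1/r²)·[(1/(2π))∫₀^{2π} u(ζ+re^{iθ}) dθ − u(ζ)]`. -/
def genLap (u : ℂ → ℝ) (ζ : ℂ) : EReal :=
  ((4 : ℝ) : EReal) * Filter.liminf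
    (fun r : ℝ =>
      (((1 / r ^ 2) *
        ((1 / (2 * Real.pi)) *
          (∫ θ in (0:ℝ)..(2 * Real.pi), u (ζ + r * Complex.exp (θ * Complex.I))) - u ζ) : ℝ) :
        EReal))
    (nhdsWithin 0 (Set.Ioi 0))

/-- The Gaussian curvature of the pseudohermitian metric with scale `g`, computed with the
generalized Laplacian: `K(μ_g)(ζ) = −(1/(2g(ζ)))·Δ(log g)(ζ)`. -/
def gaussCurv (g : ℂ → ℝ) (ζ : ℂ) : EReal :=
  ((-(1 / (2 * g ζ)) : ℝ) : EReal) * genLap (fun w => Real.log (g w)) ζ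

variable {n : ℕ}

/-- A domain in `ℂⁿ`: a nonempty open connected set. -/
def IsDomainSet (Ω : Set (Fin n → ℂ)) : Prop := IsOpen Ω ∧ IsConnected Ω

/-- A complex Finsler metric on `Ω`: upper semicontinuous, positive on nonzero vectors,
and absolutely homogeneous of degree one in the vector variable. -/
def IsFinsler (Ω : Set (Fin n → ℂ)) (F : (Fin n → ℂ) → (Fin n → ℂ) → ℝ) : Prop :=
  UpperSemicontinuousOn (fun x : (Fin n → ℂ) × (Fin n → ℂ) => F x.1 x.2) (Ω ×ˢ Set.univ) ∧
    (∀ p ∈ Ω, ∀ v : Fin n → ℂ, 0 ≤ F p v) ∧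
    (∀ p ∈ Ω, ∀ v : Fin n → ℂ, v ≠ 0 → 0 < F p v) ∧
    ∀ p ∈ Ω, ∀ v : Fin n → ℂ, ∀ l : ℂ, F p (l • v) = ‖l‖ * F p v

/-- A holomorphic map from the unit disk into `Ω`. -/
def HoloDisk (Ω : Set (Fin n → ℂ)) (φ : ℂ → Fin n → ℂ) : Prop :=
  DifferentiableOn ℂ φ UDisk ∧ Set.MapsTo φ UDisk Ω

/-- The holomorphic curvature of a complex Finsler metric `F` at `(p;v)`:
the supremum of the Gaussian curvatures at `0` of the pullbacks `φ*G`, `G = F²`, over all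
holomorphic disks `φ : U → Ω` with `φ(0) = p` and `φ'(0) = λ·v` for some `λ ≠ 0`. -/
def holCurv (Ω : Set (Fin n → ℂ)) (F : (Fin n → ℂ) → (Fin n → ℂ) → ℝ)
    (p v : Fin n → ℂ) : EReal :=
  sSup {k : EReal | ∃ φ : ℂ → Fin n → ℂ, HoloDisk Ω φ ∧ φ 0 = p ∧
    (∃ l : ℂ, l ≠ 0 ∧ deriv φ 0 = l • v) ∧
    k = gaussCurv (fun ζ => F (φ ζ) (deriv φ ζ) ^ 2) 0}

/-- The Kobayashi metric of `Ω`: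
`κ_Ω(p;v) = inf{|λ| : ∃ holomorphic φ : U → Ω, φ(0) = p, λ·φ'(0) = v}`. -/
def kobMetric (Ω : Set (Fin n → ℂ)) (p v : Fin n → ℂ) : ℝ :=
  sInf {c : ℝ | ∃ l : ℂ, ∃ φ : ℂ → Fin n → ℂ, HoloDisk Ω φ ∧ φ 0 = p ∧
    l • deriv φ 0 = v ∧ c = ‖l‖}

/-- `F` is realizable at `(p;v)` if there is a holomorphic disk which is an isometry at the
origin between the Poincaré metric and `F` in the direction `v`. -/
def Realizable {n : ℕ} (Ω : Set (Fin n → ℂ)) (F : (Fin n → ℂ) → (Fin n → ℂ) → ℝ)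
    (p v : Fin n → ℂ) : Prop :=
  ∃ φ : ℂ → Fin n → ℂ, ∃ l : ℂ, HoloDisk Ω φ ∧ φ 0 = p ∧ l • deriv φ 0 = v ∧
    ‖l‖ = F p v

open Topology

lemma mem_UDisk_iff {w : ℂ} : w ∈ UDisk ↔ normSq w < 1 := by
  rw [UDisk, mem_ball_zero_iff, normSq_eq_norm_sq, sq_lt_one_iff₀ (norm_nonneg w)]

lemma zero_mem_UDisk : (0 : ℂ) ∈ UDisk := mem_ball_self one_pos

lemma mem_closedBall_zero_one_iff {w : ℂ} : w ∈ closedBall (0 : ℂ) 1 ↔ normSq w ≤ 1 := by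
  rw [mem_closedBall_zero_iff, normSq_eq_norm_sq, sq_le_one_iff₀ (norm_nonneg w)]

section Moebius

/-- The automorphism of the unit disk sending `0` to `a`. -/
def moebius (a w : ℂ) : ℂ := (w + a) / (1 + conj a * w)

variable {a w : ℂ}

lemma normSq_one_add_conj_mul_sub_normSq_add (a w : ℂ) :
    normSq (1 + conj a * w) - normSq (w + a) = (1 - normSq a) * (1 - normSq w) := by
  simp only [normSq_apply, add_re, add_im, mul_re, mul_im, conj_re, conj_im, one_re, one_im]
  ring

lemma normSq_one_add_conj_mul_pos (ha : a ∈ UDisk) (hw : w ∈ UDisk) :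
    0 < normSq (1 + conj a * w) := by
  rw [mem_UDisk_iff] at ha hw
  nlinarith [normSq_one_add_conj_mul_sub_normSq_add a w, normSq_nonneg (w + a)]

lemma one_sub_normSq_moebius (ha : a ∈ UDisk) (hw : w ∈ UDisk) :
    1 - normSq (moebius a w) = (1 - normSq a) * (1 - normSq w) / normSq (1 + conj a * w) := by
  rw [moebius, normSq_div, one_sub_div (normSq_one_add_conj_mul_pos ha hw).ne',
    ← normSq_one_add_conj_mul_sub_normSq_add]

lemma moebius_mem_UDisk (ha : a ∈ UDisk) (hw : w ∈ UDisk) : moebius a w ∈ UDisk := by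
  have h := one_sub_normSq_moebius ha hw
  have hden := normSq_one_add_conj_mul_pos ha hw
  rw [mem_UDisk_iff] at ha hw ⊢
  have : 0 < (1 - normSq a) * (1 - normSq w) / normSq (1 + conj a * w) := by
    apply div_pos _ hden
    nlinarith
  linarith

lemma moebius_zero (a : ℂ) : moebius a 0 = a := by simp [moebius]

lemma hasDerivAt_moebius (ha : a ∈ UDisk) (hw : w ∈ UDisk) :
    HasDerivAt (moebius a) ((1 - conj a * a) / (1 + conj a * w) ^ 2) w := by
  have hden : 1 + conj a * w ≠ 0 := by
    rw [← normSq_pos]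
    exact normSq_one_add_conj_mul_pos ha hw
  have hnum : HasDerivAt (fun z : ℂ => z + a) 1 w := (hasDerivAt_id w).add_const a
  have hden' : HasDerivAt (fun z : ℂ => 1 + conj a * z) (conj a) w := by
    simpa using ((hasDerivAt_id w).const_mul (conj a)).const_add 1
  exact (hnum.div hden' hden).congr_deriv (by ring)

/-- Schwarz–Pick with equality: a disk automorphism is a Poincaré isometry. -/
lemma norm_deriv_moebius_mul (ha : a ∈ UDisk) (hw : w ∈ UDisk) :
    ‖deriv (moebius a) w‖ * (1 - normSq w) = 1 - normSq (moebius a w) := by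
  have hnum : ((1 - conj a * a : ℂ)) = ((1 - normSq a : ℝ) : ℂ) := by
    rw [mul_comm, mul_conj]
    push_cast
    ring
  have hpos : 0 ≤ 1 - normSq a := by linarith [mem_UDisk_iff.1 ha]
  rw [(hasDerivAt_moebius ha hw).deriv, one_sub_normSq_moebius ha hw, hnum, norm_div,
    norm_pow, norm_real, Real.norm_of_nonneg hpos, ← normSq_eq_norm_sq]
  exact div_mul_eq_mul_div _ _ _

end Moebius

section Laplacian

/-- Lean's integral of a non-integrable function is `0`, hence the hypothesis `0 ≤ M`. -/
lemma circle_mean_le_of_le {f : ℝ → ℝ} {M : ℝ} (hM : 0 ≤ M) (hf : ∀ θ, f θ ≤ M) :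
    1 / (2 * Real.pi) * ∫ θ in (0 : ℝ)..2 * Real.pi, f θ ≤ M := by
  by_cases hint : IntervalIntegrable f volume 0 (2 * Real.pi)
  · have h := intervalIntegral.integral_mono_on Real.two_pi_pos.le hint intervalIntegrable_const
      fun θ _ => hf θ
    rw [intervalIntegral.integral_const, smul_eq_mul, sub_zero] at h
    calc _ ≤ 1 / (2 * Real.pi) * (2 * Real.pi * M) := by gcongr
      _ = M := by field_simp
  · rw [intervalIntegral.integral_undef hint, mul_zero]
    exact hM

lemma genLap_le_of_le_add_sq_mul {u : ℂ → ℝ} {ζ : ℂ} {b : ℝ → ℝ} {c : ℝ} (hu : 0 ≤ u ζ)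
    (hb : ∀ᶠ r : ℝ in 𝓝[>] 0,
      0 ≤ b r ∧ ∀ θ : ℝ, u (ζ + (r : ℂ) * exp ((θ : ℂ) * I)) ≤ u ζ + r ^ 2 * b r)
    (hlim : Tendsto b (𝓝[>] 0) (𝓝 c)) :
    genLap u ζ ≤ ((4 * c : ℝ) : EReal) := by
  have hquot : ∀ᶠ r : ℝ in 𝓝[>] 0,
      (((1 / r ^ 2) * ((1 / (2 * Real.pi)) *
        (∫ θ in (0 : ℝ)..(2 * Real.pi), u (ζ + (r : ℂ) * exp ((θ : ℂ) * I))) - u ζ) : ℝ) :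
        EReal) ≤ b r := by
    filter_upwards [hb, self_mem_nhdsWithin] with r ⟨hb0, hbu⟩ (hr : 0 < r)
    have hmean := circle_mean_le_of_le (by positivity) hbu
    rw [EReal.coe_le_coe_iff]
    calc _ ≤ 1 / r ^ 2 * (r ^ 2 * b r) := by gcongr; linarith
      _ = b r := by field_simp
  rw [genLap, EReal.coe_mul]
  exact mul_le_mul_of_nonneg_left
    ((liminf_le_liminf hquot).trans (EReal.tendsto_coe.2 hlim).liminf_eq.le) (by norm_num)

/-- `8` is `Δ log` at `0` of the Poincaré metric `(1 - |w|²)⁻²`, the comparison metric here. -/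
lemma genLap_log_le_eight {g : ℂ → ℝ} (hg0 : 1 ≤ g 0) (hg : ∀ w ∈ UDisk, 0 ≤ g w)
    (hle : ∀ w ∈ UDisk, g w * (1 - normSq w) ^ 2 ≤ g 0) :
    genLap (fun w => Real.log (g w)) 0 ≤ ((8 : ℝ) : EReal) := by
  have hlim : Tendsto (fun r : ℝ => 2 / (1 - r ^ 2)) (𝓝[>] 0) (𝓝 2) := by
    have : ContinuousAt (fun r : ℝ => 2 / (1 - r ^ 2)) 0 := by fun_prop (disch := norm_num)
    simpa using this.tendsto.mono_left nhdsWithin_le_nhds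
  convert genLap_le_of_le_add_sq_mul (u := fun w => Real.log (g w)) (Real.log_nonneg hg0) _ hlim
    using 2
  · norm_num
  filter_upwards [Ioo_mem_nhdsGT zero_lt_one] with r ⟨hr0, hr1⟩
  have hr2 : 0 < 1 - r ^ 2 := by nlinarith
  refine ⟨by positivity, fun θ => ?_⟩
  set w : ℂ := 0 + r * exp (θ * I) with hw_def
  have hw : normSq w = r ^ 2 := by
    rw [normSq_eq_norm_sq, hw_def, zero_add, norm_mul, norm_exp_ofReal_mul_I, norm_real,
      Real.norm_of_nonneg hr0.le, mul_one]
  have hwU : w ∈ UDisk := by rw [mem_UDisk_iff, hw]; nlinarith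
  have hlog : -(2 * Real.log (1 - r ^ 2)) ≤ r ^ 2 * (2 / (1 - r ^ 2)) := by
    have := Real.one_sub_inv_le_log_of_pos hr2
    have : 1 - (1 - r ^ 2)⁻¹ = -(r ^ 2 * (2 / (1 - r ^ 2))) / 2 := by field_simp; ring
    linarith
  rcases (hg w hwU).eq_or_lt with hgw | hgw
  · rw [← hgw, Real.log_zero]
    have := Real.log_nonneg hg0
    positivity
  · have hmono := Real.log_le_log (by positivity) (hw ▸ hle w hwU)
    rw [Real.log_mul hgw.ne' (by positivity), Real.log_pow] at hmono
    push_cast at hmono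
    linarith

lemma le_gaussCurv_of_genLap_le {g : ℂ → ℝ} {ζ : ℂ} {c : ℝ} (hg : 0 < g ζ)
    (h : genLap (fun w => Real.log (g w)) ζ ≤ c) :
    ((-c / (2 * g ζ) : ℝ) : EReal) ≤ gaussCurv g ζ := by
  have hcoef : ((-(1 / (2 * g ζ)) : ℝ) : EReal) ≤ 0 :=
    EReal.coe_nonpos.2 (neg_nonpos.2 (by positivity))
  calc ((-c / (2 * g ζ) : ℝ) : EReal)
        = (c : EReal) * ((-(1 / (2 * g ζ)) : ℝ) : EReal) := by
        rw [← EReal.coe_mul]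
        ring_nf
    _ ≤ genLap (fun w => Real.log (g w)) ζ * ((-(1 / (2 * g ζ)) : ℝ) : EReal) :=
        EReal.mul_le_mul_of_nonpos_right h hcoef
    _ = gaussCurv g ζ := mul_comm _ _

end Laplacian

section Finsler

variable {Ω : Set (Fin n → ℂ)} {F : (Fin n → ℂ) → (Fin n → ℂ) → ℝ} {φ : ℂ → Fin n → ℂ}

lemma IsFinsler.apply_zero (hF : IsFinsler Ω F) {p : Fin n → ℂ} (hp : p ∈ Ω) : F p 0 = 0 := by
  simpa using hF.2.2.2 p hp 0 0

/-- The ratio `(1 - |ζ|²) F(φ(ζ); φ'(ζ))` of `φ*F` to the Poincaré metric, with the weight moved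
inside `F` so that upper semicontinuity is inherited by composition. -/
def poincareRatio (F : (Fin n → ℂ) → (Fin n → ℂ) → ℝ) (φ : ℂ → Fin n → ℂ) (ζ : ℂ) : ℝ :=
  F (φ ζ) (((1 - normSq ζ : ℝ) : ℂ) • deriv φ ζ)

lemma poincareRatio_eq (hF : IsFinsler Ω F) {ζ : ℂ} (hφ : φ ζ ∈ Ω) (hζ : normSq ζ ≤ 1) :
    poincareRatio F φ ζ = (1 - normSq ζ) * F (φ ζ) (deriv φ ζ) := by
  rw [poincareRatio, hF.2.2.2 _ hφ, norm_real, Real.norm_of_nonneg (by linarith)]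

lemma poincareRatio_nonneg (hF : IsFinsler Ω F) {ζ : ℂ} (hφ : φ ζ ∈ Ω) :
    0 ≤ poincareRatio F φ ζ :=
  hF.2.1 _ hφ _

lemma upperSemicontinuousOn_poincareRatio (hF : IsFinsler Ω F) {s : Set ℂ} (hs : IsOpen s)
    (hφ : DifferentiableOn ℂ φ s) (hφs : MapsTo φ s Ω) :
    UpperSemicontinuousOn (poincareRatio F φ) s := by
  have hcont : ContinuousOn (fun ζ => (φ ζ, ((1 - normSq ζ : ℝ) : ℂ) • deriv φ ζ)) s :=
    hφ.continuousOn.prodMk <| (by fun_prop : Continuous fun ζ => ((1 - normSq ζ : ℝ) : ℂ))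
      |>.continuousOn.smul (hφ.analyticOnNhd hs).deriv.continuousOn
  exact hF.1.comp hcont fun ζ hζ => ⟨hφs hζ, mem_univ _⟩

variable {a w : ℂ}

lemma HoloDisk.comp_moebius (hφ : HoloDisk Ω φ) (ha : a ∈ UDisk) :
    HoloDisk Ω (φ ∘ moebius a) :=
  ⟨hφ.1.comp (fun _ hw => (hasDerivAt_moebius ha hw).differentiableAt.differentiableWithinAt)
    fun _ hw => moebius_mem_UDisk ha hw, hφ.2.comp fun _ hw => moebius_mem_UDisk ha hw⟩

lemma poincareRatio_comp_moebius (hF : IsFinsler Ω F) (hφ : HoloDisk Ω φ) (ha : a ∈ UDisk)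
    (hw : w ∈ UDisk) :
    poincareRatio F (φ ∘ moebius a) w = poincareRatio F φ (moebius a w) := by
  have hTw := moebius_mem_UDisk ha hw
  have hderiv : deriv (φ ∘ moebius a) w = deriv (moebius a) w • deriv φ (moebius a w) :=
    deriv.scomp w (hφ.1.differentiableAt (isOpen_ball.mem_nhds hTw))
      (hasDerivAt_moebius ha hw).differentiableAt
  rw [poincareRatio, poincareRatio, hderiv, smul_smul, Function.comp_apply,
    hF.2.2.2 _ (hφ.2 hTw), hF.2.2.2 _ (hφ.2 hTw), norm_mul, norm_real, norm_real, mul_comm ‖_‖,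
    Real.norm_of_nonneg (by linarith [mem_UDisk_iff.1 hw]),
    Real.norm_of_nonneg (by linarith [mem_UDisk_iff.1 hTw]), norm_deriv_moebius_mul ha hw]

end Finsler

section AhlforsSchwarz

variable {Ω : Set (Fin n → ℂ)} {F : (Fin n → ℂ) → (Fin n → ℂ) → ℝ}

lemma poincareRatio_le_one_of_isMaxOn (hF : IsFinsler Ω F)
    (hcurv : ∀ p ∈ Ω, ∀ v : Fin n → ℂ, v ≠ 0 → holCurv Ω F p v ≤ ((-4 : ℝ) : EReal))
    {φ : ℂ → Fin n → ℂ} (hφ : HoloDisk Ω φ) {a : ℂ} (ha : a ∈ UDisk)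
    (hmax : IsMaxOn (poincareRatio F φ) UDisk a) :
    poincareRatio F φ a ≤ 1 := by
  set M := poincareRatio F φ a
  set χ := φ ∘ moebius a
  have hχ : HoloDisk Ω χ := hφ.comp_moebius ha
  set g : ℂ → ℝ := fun w => F (χ w) (deriv χ w) ^ 2
  have hg : ∀ w ∈ UDisk, g w * (1 - normSq w) ^ 2 = poincareRatio F φ (moebius a w) ^ 2 := by
    intro w hw
    rw [← poincareRatio_comp_moebius hF hφ ha hw,
      poincareRatio_eq hF (hχ.2 hw) (mem_UDisk_iff.1 hw).le]
    ring
  have hg0 : g 0 = M ^ 2 := by simpa [moebius_zero] using hg 0 zero_mem_UDisk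
  by_contra! hM
  have hlap : genLap (fun w => Real.log (g w)) 0 ≤ ((8 : ℝ) : EReal) := by
    refine genLap_log_le_eight (by nlinarith) (fun w _ => sq_nonneg _) fun w hw => ?_
    rw [hg w hw, hg0]
    exact pow_le_pow_left₀ (poincareRatio_nonneg hF (hφ.2 (moebius_mem_UDisk ha hw)))
      (isMaxOn_iff.1 hmax _ (moebius_mem_UDisk ha hw)) 2
  have hv : deriv χ 0 ≠ 0 := by
    intro h0
    have : g 0 = 0 := by simp [g, h0, hF.apply_zero (hχ.2 zero_mem_UDisk)]
    nlinarith
  have hK_le_holCurv : gaussCurv g 0 ≤ holCurv Ω F (χ 0) (deriv χ 0) :=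
    le_sSup ⟨χ, hχ, rfl, ⟨1, one_ne_zero, (one_smul _ _).symm⟩, rfl⟩
  have := EReal.coe_le_coe_iff.1
    ((le_gaussCurv_of_genLap_le (by rw [hg0]; positivity) hlap).trans
      (hK_le_holCurv.trans (hcurv _ (hχ.2 zero_mem_UDisk) _ hv)))
  rw [hg0, div_le_iff₀ (by positivity)] at this
  nlinarith

lemma poincareRatio_zero_le_one (hF : IsFinsler Ω F)
    (hcurv : ∀ p ∈ Ω, ∀ v : Fin n → ℂ, v ≠ 0 → holCurv Ω F p v ≤ ((-4 : ℝ) : EReal))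
    {ψ : ℂ → Fin n → ℂ} {s : Set ℂ} (hs : IsOpen s) (hsub : closedBall 0 1 ⊆ s)
    (hψ : DifferentiableOn ℂ ψ s) (hψs : MapsTo ψ s Ω) :
    poincareRatio F ψ 0 ≤ 1 := by
  obtain ⟨a, ha, hmax⟩ := ((upperSemicontinuousOn_poincareRatio hF hs hψ hψs).mono hsub)
    |>.exists_isMaxOn ⟨0, mem_closedBall_self zero_le_one⟩ (isCompact_closedBall 0 1)
  have h0a := isMaxOn_iff.1 hmax 0 (mem_closedBall_self zero_le_one)
  have hU : UDisk ⊆ s := ball_subset_closedBall.trans hsub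
  by_cases haU : a ∈ UDisk
  · exact h0a.trans <| poincareRatio_le_one_of_isMaxOn hF hcurv
      ⟨hψ.mono hU, hψs.mono_left hU⟩ haU (hmax.on_subset ball_subset_closedBall)
  · -- on the unit circle the Poincaré weight vanishes
    have ha1 : normSq a = 1 :=
      le_antisymm (mem_closedBall_zero_one_iff.1 ha) (not_lt.1 (mt mem_UDisk_iff.2 haU))
    have : poincareRatio F ψ a = 0 := by
      simp [poincareRatio, ha1, hF.apply_zero (hψs (hsub ha))]
    linarith

theorem apply_deriv_zero_le_one_of_holCurv_le (hF : IsFinsler Ω F)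
    (hcurv : ∀ p ∈ Ω, ∀ v : Fin n → ℂ, v ≠ 0 → holCurv Ω F p v ≤ ((-4 : ℝ) : EReal))
    {φ : ℂ → Fin n → ℂ} (hφ : HoloDisk Ω φ) :
    F (φ 0) (deriv φ 0) ≤ 1 := by
  set x := F (φ 0) (deriv φ 0)
  have hlim : Tendsto (fun t : ℝ => t * x) (𝓝[<] 1) (𝓝 x) := by
    simpa using ((tendsto_id (x := 𝓝 (1 : ℝ))).mul_const x).mono_left nhdsWithin_le_nhds
  refine le_of_tendsto hlim ?_
  filter_upwards [Ioo_mem_nhdsLT zero_lt_one] with t ⟨ht0, ht1⟩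
  -- the rescaled disk `ζ ↦ φ (t ζ)` is holomorphic beyond the closed unit disk
  have hscale : MapsTo (fun ζ : ℂ => (t : ℂ) * ζ) (ball 0 t⁻¹) UDisk := by
    intro ζ hζ
    rw [mem_ball_zero_iff] at hζ
    rw [UDisk, mem_ball_zero_iff, norm_mul, norm_real, Real.norm_of_nonneg ht0.le]
    calc t * ‖ζ‖ < t * t⁻¹ := by gcongr
      _ = 1 := mul_inv_cancel₀ ht0.ne'
  have hψ : DifferentiableOn ℂ (fun ζ => φ ((t : ℂ) * ζ)) (ball 0 t⁻¹) :=
    hφ.1.comp (differentiableOn_id.const_mul _) hscale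
  have h := poincareRatio_zero_le_one hF hcurv isOpen_ball
    (closedBall_subset_ball (one_lt_inv₀ ht0 |>.2 ht1)) hψ (hφ.2.comp hscale)
  have hφ0 : φ ((t : ℂ) * 0) ∈ Ω := by simpa using hφ.2 zero_mem_UDisk
  rw [poincareRatio_eq (φ := fun ζ => φ ((t : ℂ) * ζ)) hF hφ0 (by simp), deriv_comp_mul_left,
    hF.2.2.2 _ hφ0, norm_real, Real.norm_of_nonneg ht0.le] at h
  simpa using h

end AhlforsSchwarz

section Kobayashi

variable {Ω : Set (Fin n → ℂ)} {p v : Fin n → ℂ}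

lemma kobMetric_le {φ : ℂ → Fin n → ℂ} {l : ℂ} (hφ : HoloDisk Ω φ) (hφ0 : φ 0 = p)
    (hl : l • deriv φ 0 = v) : kobMetric Ω p v ≤ ‖l‖ :=
  csInf_le ⟨0, by rintro _ ⟨l, -, -, -, -, rfl⟩; exact norm_nonneg l⟩ ⟨l, φ, hφ, hφ0, hl, rfl⟩

/-- A small linear disk `ζ ↦ p + (ε ζ) • v` in the direction `v`. -/
lemma exists_holoDisk_smul_deriv_eq (hΩ : IsOpen Ω) (hp : p ∈ Ω) (v : Fin n → ℂ) :
    ∃ l : ℂ, ∃ φ : ℂ → Fin n → ℂ, HoloDisk Ω φ ∧ φ 0 = p ∧ l • deriv φ 0 = v := by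
  obtain ⟨δ, hδ, hball⟩ := Metric.isOpen_iff.1 hΩ p hp
  set ε : ℝ := δ / (‖v‖ + 1)
  have hε : 0 < ε := by positivity
  have hderiv : ∀ ζ : ℂ, HasDerivAt (fun ζ : ℂ => p + ((ε : ℂ) * ζ) • v) ((ε : ℂ) • v) ζ :=
    fun ζ => by simpa using (((hasDerivAt_id ζ).const_mul (ε : ℂ)).smul_const v).const_add p
  refine ⟨(ε : ℂ)⁻¹, _, ⟨fun ζ _ => (hderiv ζ).differentiableAt.differentiableWithinAt,
    fun ζ hζ => hball ?_⟩, by simp, ?_⟩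
  · rw [UDisk, mem_ball_zero_iff] at hζ
    rw [mem_ball, dist_eq_norm, add_sub_cancel_left, norm_smul, norm_mul, norm_real,
      Real.norm_of_nonneg hε.le]
    calc ε * ‖ζ‖ * ‖v‖ ≤ ε * ‖v‖ := by gcongr; exact mul_le_of_le_one_right hε.le hζ.le
      _ < δ := by
        rw [div_mul_eq_mul_div, div_lt_iff₀ (by positivity)]
        nlinarith [norm_nonneg v]
  · rw [(hderiv 0).deriv, smul_smul, inv_mul_cancel₀ (by exact_mod_cast hε.ne'), one_smul]

lemma le_kobMetric (hΩ : IsOpen Ω) (hp : p ∈ Ω) {b : ℝ}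
    (h : ∀ (l : ℂ) (φ : ℂ → Fin n → ℂ),
      HoloDisk Ω φ → φ 0 = p → l • deriv φ 0 = v → b ≤ ‖l‖) :
    b ≤ kobMetric Ω p v := by
  obtain ⟨l, φ, hφ, hφ0, hl⟩ := exists_holoDisk_smul_deriv_eq hΩ hp v
  exact le_csInf ⟨_, l, φ, hφ, hφ0, hl, rfl⟩
    fun _ ⟨l, φ, hφ, hφ0, hl, hc⟩ => hc ▸ h l φ hφ hφ0 hl

theorem le_kobMetric_of_holCurv_le {F : (Fin n → ℂ) → (Fin n → ℂ) → ℝ} (hΩ : IsOpen Ω)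
    (hF : IsFinsler Ω F)
    (hcurv : ∀ p ∈ Ω, ∀ v : Fin n → ℂ, v ≠ 0 → holCurv Ω F p v ≤ ((-4 : ℝ) : EReal))
    (hp : p ∈ Ω) : F p v ≤ kobMetric Ω p v :=
  le_kobMetric hΩ hp fun l φ hφ hφ0 hl => by
    calc F p v = ‖l‖ * F (φ 0) (deriv φ 0) := by rw [← hl, ← hφ0, hF.2.2.2 _ (hφ0 ▸ hp)]
      _ ≤ ‖l‖ := mul_le_of_le_one_right (norm_nonneg l)
        (apply_deriv_zero_le_one_of_holCurv_le hF hcurv hφ)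

end Kobayashi

theorem stmt_7_general {n : ℕ} (Ω : Set (Fin n → ℂ)) (hΩ : IsDomainSet Ω)
    (F : (Fin n → ℂ) → (Fin n → ℂ) → ℝ) (hF : IsFinsler Ω F)
    (p₀ : Fin n → ℂ) (hp₀ : p₀ ∈ Ω) (v₀ : Fin n → ℂ) :
    (Realizable Ω F p₀ v₀ → kobMetric Ω p₀ v₀ ≤ F p₀ v₀) ∧
    ((∀ p ∈ Ω, ∀ v : Fin n → ℂ, v ≠ 0 → holCurv Ω F p v ≤ ((-4 : ℝ) : EReal)) →
      ∀ p ∈ Ω, ∀ v : Fin n → ℂ, F p v ≤ kobMetric Ω p v) ∧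
    (Realizable Ω F p₀ v₀ →
      (∀ p ∈ Ω, ∀ v : Fin n → ℂ, v ≠ 0 → holCurv Ω F p v ≤ ((-4 : ℝ) : EReal)) →
      F p₀ v₀ = kobMetric Ω p₀ v₀) := by
  have kob_le : Realizable Ω F p₀ v₀ → kobMetric Ω p₀ v₀ ≤ F p₀ v₀ := by
    rintro ⟨φ, l, hφ, hφ0, hl, hnorm⟩
    exact hnorm ▸ kobMetric_le hφ hφ0 hl
  have le_kob : (∀ p ∈ Ω, ∀ v : Fin n → ℂ, v ≠ 0 → holCurv Ω F p v ≤ ((-4 : ℝ) : EReal)) →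
      ∀ p ∈ Ω, ∀ v : Fin n → ℂ, F p v ≤ kobMetric Ω p v :=
    fun hcurv _ hp _ => le_kobMetric_of_holCurv_le hΩ.1 hF hcurv hp
  exact ⟨kob_le, le_kob,
    fun hreal hcurv => (le_kob hcurv p₀ hp₀ v₀).antisymm (kob_le hreal)⟩

/-- (i) If `F` is realizable at `(p₀;v₀)` then `F(p₀;v₀) ≥ κ_Ω(p₀;v₀)`;
(ii) if `K_F ≤ −4` then `F ≤ κ_Ω`; (iii) both together give `F(p₀;v₀) = κ_Ω(p₀;v₀)`. -/
theorem stmt_7 {n : ℕ} (hn : 1 ≤ n) (Ω : Set (Fin n → ℂ)) (hΩ : IsDomainSet Ω)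
    (F : (Fin n → ℂ) → (Fin n → ℂ) → ℝ) (hF : IsFinsler Ω F)
    (p₀ : Fin n → ℂ) (hp₀ : p₀ ∈ Ω) (v₀ : Fin n → ℂ) :
    (Realizable Ω F p₀ v₀ → kobMetric Ω p₀ v₀ ≤ F p₀ v₀) ∧
    ((∀ p ∈ Ω, ∀ v : Fin n → ℂ, v ≠ 0 → holCurv Ω F p v ≤ ((-4 : ℝ) : EReal)) →
      ∀ p ∈ Ω, ∀ v : Fin n → ℂ, F p v ≤ kobMetric Ω p v) ∧
    (Realizable Ω F p₀ v₀ →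
      (∀ p ∈ Ω, ∀ v : Fin n → ℂ, v ≠ 0 → holCurv Ω F p v ≤ ((-4 : ℝ) : EReal)) →
      F p₀ v₀ = kobMetric Ω p₀ v₀) :=
  stmt_7_general Ω hΩ F hF p₀ hp₀ v₀
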